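/- Theorem 3 (Poisson sampling, strict inequality): Suppose the sampling indicators I_1,…,I_N are mutually independent (Poisson sampling), that a ≤ 1/(K+1), and that there exist k ≠ l in U₂ with (π_k − a) y_k ≠ (π_l − a) y_l. Then E[(t̂_IHT − t_y)²] < E[(t̂_HT − t_y)²]. -/

import Mathlib

/-!
Under Poisson sampling a linear estimator `∑ I_k w_k` of `t` has mean squared error
`∑ w_k² π_k (1 - π_k) + (∑ π_k w_k - t)²`. Passing from HT to IHT changes only the weights on
`U₂`: it creates the bias `(1/a) ∑_{U₂} (π_k - a) y_k` and lowers every variance term on `U₂`.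
By the strict Cauchy–Schwarz inequality the squared bias is below `(K/a²) ∑_{U₂} ((π_k - a) y_k)²`,
and `a ≤ 1/(K+1)` makes each summand of that bound at most the corresponding variance drop.
-/

open MeasureTheory ProbabilityTheory Finset

section Probability

variable {Ω ι : Type*} [MeasurableSpace Ω] {μ : Measure Ω}

lemma integral_sub_const_sq [IsProbabilityMeasure μ] {X : Ω → ℝ} (hX : MemLp X 2 μ) (t : ℝ) :
    ∫ ω, (X ω - t) ^ 2 ∂μ = Var[X; μ] + (μ[X] - t) ^ 2 := by
  have hXt : MemLp (fun ω ↦ X ω - t) 2 μ := hX.sub (memLp_const t)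
  rw [← variance_sub_const hX.aestronglyMeasurable t, variance_eq_sub hXt,
    integral_sub (hX.integrable one_le_two) (integrable_const t)]
  simp

lemma memLp_of_forall_eq_zero_or_eq_one [IsFiniteMeasure μ] {X : Ω → ℝ} (hXm : Measurable X)
    (hX : ∀ ω, X ω = 0 ∨ X ω = 1) : MemLp X 2 μ :=
  MemLp.of_bound hXm.aestronglyMeasurable 1
    (ae_of_all _ fun ω ↦ by rcases hX ω with h | h <;> simp [h])

lemma variance_of_forall_eq_zero_or_eq_one [IsProbabilityMeasure μ] {X : Ω → ℝ}
    (hXm : Measurable X) (hX : ∀ ω, X ω = 0 ∨ X ω = 1) : Var[X; μ] = μ[X] * (1 - μ[X]) := by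
  have hXsq : X ^ 2 = X := funext fun ω ↦ by rcases hX ω with h | h <;> simp [h]
  rw [variance_eq_sub (memLp_of_forall_eq_zero_or_eq_one hXm hX), hXsq]
  ring

lemma iIndepFun.variance_sum_mul_const [Fintype ι] {X : ι → Ω → ℝ} (hX : ∀ k, MemLp (X k) 2 μ)
    (hindep : iIndepFun X μ) (w : ι → ℝ) :
    Var[fun ω ↦ ∑ k, X k ω * w k; μ] = ∑ k, w k ^ 2 * Var[X k; μ] := by
  have h := IndepFun.variance_sum (s := univ) (X := fun k ω ↦ X k ω * w k)
    (fun k _ ↦ (hX k).mul_const (w k)) fun k _ l _ hkl ↦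
      (hindep.indepFun hkl).comp (measurable_id.mul_const (w k)) (measurable_id.mul_const (w l))
  rw [show (fun ω ↦ ∑ k, X k ω * w k) = ∑ k, fun ω ↦ X k ω * w k by ext; simp, h]
  simp_rw [variance_mul_const, mul_comm]

def poissonMSE [Fintype ι] (π w : ι → ℝ) (t : ℝ) : ℝ :=
  ∑ k, w k ^ 2 * (π k * (1 - π k)) + (∑ k, π k * w k - t) ^ 2

lemma integral_sum_mul_sub_sq_eq_poissonMSE [IsProbabilityMeasure μ] [Fintype ι]
    {I : ι → Ω → ℝ} (hI : ∀ k ω, I k ω = 0 ∨ I k ω = 1) (hIm : ∀ k, Measurable (I k))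
    (hindep : iIndepFun I μ) (w : ι → ℝ) (t : ℝ) :
    ∫ ω, (∑ k, I k ω * w k - t) ^ 2 ∂μ = poissonMSE (fun k ↦ μ[I k]) w t := by
  have hILp k : MemLp (I k) 2 μ := memLp_of_forall_eq_zero_or_eq_one (hIm k) (hI k)
  rw [integral_sub_const_sq
      (memLp_finsetSum (f := fun k ω ↦ I k ω * w k) _ fun k _ ↦ (hILp k).mul_const (w k)),
    iIndepFun.variance_sum_mul_const hILp hindep,
    integral_finsetSum _ fun k _ ↦ ((hILp k).integrable one_le_two).mul_const (w k)]
  simp_rw [variance_of_forall_eq_zero_or_eq_one (hIm _) (hI _), integral_mul_const]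
  rfl

end Probability

lemma sum_sum_sub_sq {R ι : Type*} [CommRing R] (s : Finset ι) (f : ι → R) :
    ∑ i ∈ s, ∑ j ∈ s, (f i - f j) ^ 2 = 2 * (#s * ∑ i ∈ s, f i ^ 2 - (∑ i ∈ s, f i) ^ 2) := by
  simp_rw [sub_sq, sum_add_distrib, sum_sub_distrib, sum_const, nsmul_eq_mul, ← mul_sum,
    ← sum_mul, ← mul_sum]
  ring

lemma sq_sum_lt_card_mul_sum_sq {ι : Type*} {s : Finset ι} {f : ι → ℝ}
    (hf : ∃ i ∈ s, ∃ j ∈ s, f i ≠ f j) : (∑ i ∈ s, f i) ^ 2 < #s * ∑ i ∈ s, f i ^ 2 := by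
  obtain ⟨i, hi, j, hj, hij⟩ := hf
  have hpos : 0 < (f i - f j) ^ 2 := pow_two_pos_of_ne_zero (sub_ne_zero.2 hij)
  have hle : (f i - f j) ^ 2 ≤ ∑ i ∈ s, ∑ j ∈ s, (f i - f j) ^ 2 :=
    calc (f i - f j) ^ 2 ≤ ∑ j ∈ s, (f i - f j) ^ 2 :=
          single_le_sum (f := fun j ↦ (f i - f j) ^ 2) (fun _ _ ↦ sq_nonneg _) hj
      _ ≤ _ := single_le_sum (f := fun i ↦ ∑ j ∈ s, (f i - f j) ^ 2)
          (fun _ _ ↦ sum_nonneg fun _ _ ↦ sq_nonneg _) hi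
  linarith [sum_sum_sub_sq s f]

lemma mul_sq_bias_le_variance_drop {n : ℕ} {p a : ℝ} (y : ℝ) (hp : 0 < p) (hpa : p ≤ a)
    (ha : a * (n + 1) ≤ 1) :
    n * ((p - a) * y / a) ^ 2 ≤ ((y / p) ^ 2 - (y / a) ^ 2) * (p * (1 - p)) := by
  have hnp : n * (a - p) * p ≤ (1 - p) * (a + p) := by
    nlinarith [mul_le_mul_of_nonneg_left hpa hp.le, mul_nonneg (sub_nonneg.2 hpa) hp.le,
      mul_nonneg (Nat.cast_nonneg n : (0 : ℝ) ≤ n) (sq_nonneg p)]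
  have hdiff : ((y / p) ^ 2 - (y / a) ^ 2) * (p * (1 - p)) - n * ((p - a) * y / a) ^ 2
      = y ^ 2 * (a - p) * ((1 - p) * (a + p) - n * (a - p) * p) / (p * a ^ 2) := by
    have ha0 : 0 < a := hp.trans_le hpa
    field_simp
    ring
  rw [← sub_nonneg, hdiff]
  exact div_nonneg (mul_nonneg (mul_nonneg (sq_nonneg y) (sub_nonneg.2 hpa))
    (sub_nonneg.2 hnp)) (by positivity)

lemma poissonMSE_lt {ι : Type*} [Fintype ι] [DecidableEq ι] {π : ι → ℝ} (hπ : ∀ k, 0 < π k)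
    {s : Finset ι} {a : ℝ} (hs : ∀ k ∈ s, π k ≤ a) (ha : a ≤ 1 / (#s + 1)) (y : ι → ℝ)
    (hy : ∃ k ∈ s, ∃ l ∈ s, (π k - a) * y k ≠ (π l - a) * y l) :
    poissonMSE π (fun k ↦ y k / if k ∈ s then a else π k) (∑ k, y k)
      < poissonMSE π (fun k ↦ y k / π k) (∑ k, y k) := by
  have ha' : a * (#s + 1) ≤ 1 := (le_div_iff₀ (by positivity)).1 ha
  have ha0 : 0 < a := by
    obtain ⟨k, hk, -⟩ := hy
    exact (hπ k).trans_le (hs k hk)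
  have hHT : ∑ k, π k * (y k / π k) - ∑ k, y k = 0 := by
    simp_rw [mul_div_cancel₀ _ (hπ _).ne', sub_self]
  have hIHT : ∑ k, π k * (y k / if k ∈ s then a else π k) - ∑ k, y k
      = ∑ k ∈ s, (π k - a) * y k / a := by
    rw [← sum_sub_distrib, ← sum_subset (subset_univ s) fun k _ hk ↦ by
      simp [hk, mul_div_cancel₀ _ (hπ k).ne']]
    exact sum_congr rfl fun k hk ↦ by simp only [hk, if_true]; field_simp
  have hvar : ∑ k, (y k / π k) ^ 2 * (π k * (1 - π k))
      - ∑ k, (y k / if k ∈ s then a else π k) ^ 2 * (π k * (1 - π k))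
      = ∑ k ∈ s, ((y k / π k) ^ 2 - (y k / a) ^ 2) * (π k * (1 - π k)) := by
    rw [← sum_sub_distrib, ← sum_subset (subset_univ s) fun k _ hk ↦ by simp [hk]]
    exact sum_congr rfl fun k hk ↦ by simp only [hk, if_true, sub_mul]
  have hbias : (∑ k ∈ s, (π k - a) * y k / a) ^ 2
      < ∑ k ∈ s, ((y k / π k) ^ 2 - (y k / a) ^ 2) * (π k * (1 - π k)) :=
    calc (∑ k ∈ s, (π k - a) * y k / a) ^ 2
        = (∑ k ∈ s, (π k - a) * y k) ^ 2 / a ^ 2 := by rw [← sum_div, div_pow]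
      _ < #s * (∑ k ∈ s, ((π k - a) * y k) ^ 2) / a ^ 2 := by
        gcongr; exact sq_sum_lt_card_mul_sum_sq hy
      _ = ∑ k ∈ s, #s * ((π k - a) * y k / a) ^ 2 := by
        simp_rw [mul_sum, sum_div, div_pow, mul_div_assoc]
      _ ≤ _ := sum_le_sum fun k hk ↦ mul_sq_bias_le_variance_drop (y k) (hπ k) (hs k hk) ha'
  unfold poissonMSE
  rw [hHT, hIHT]
  linarith

theorem iht_lt_ht_poisson_general
    {Ω : Type*} [MeasurableSpace Ω] (μ : Measure Ω) [IsProbabilityMeasure μ]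
    (N : ℕ) (y : Fin N → ℝ) (I : Fin N → Ω → ℝ)
    (hI01 : ∀ k, ∀ ω, I k ω = 0 ∨ I k ω = 1)
    (hImeas : ∀ k, Measurable (I k))
    (hIindep : ProbabilityTheory.iIndepFun I μ)
    (π : Fin N → ℝ)
    (hπ : ∀ k, π k = ∫ ω, I k ω ∂μ)
    (hπmem : ∀ k, π k ∈ Set.Ioc (0 : ℝ) 1)
    (a : ℝ)
    (U2 : Finset (Fin N)) (K : ℕ) (hK : U2.card = K)
    (hU2 : ∀ k ∈ U2, π k ≤ a)
    (haK : a ≤ 1 / ((K : ℝ) + 1))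
    (hstrict : ∃ k ∈ U2, ∃ l ∈ U2, k ≠ l ∧ (π k - a) * y k ≠ (π l - a) * y l)
    (πs : Fin N → ℝ)
    (hπs : ∀ k, πs k = if k ∈ U2 then a else π k) :
    (∫ ω, ((∑ k, I k ω * y k / πs k) - ∑ k, y k) ^ 2 ∂μ)
      < ∫ ω, ((∑ k, I k ω * y k / π k) - ∑ k, y k) ^ 2 ∂μ := by
  have hπI : (fun k ↦ ∫ ω, I k ω ∂μ) = π := funext fun k ↦ (hπ k).symm
  simp_rw [mul_div_assoc]
  rw [integral_sum_mul_sub_sq_eq_poissonMSE hI01 hImeas hIindep,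
    integral_sum_mul_sub_sq_eq_poissonMSE hI01 hImeas hIindep, hπI, funext hπs]
  obtain ⟨k, hk, l, hl, -, hkl⟩ := hstrict
  exact poissonMSE_lt (fun k ↦ (hπmem k).1) hU2 (hK ▸ haK) y ⟨k, hk, l, hl, hkl⟩

/-- Theorem 3 (Poisson sampling, strict inequality): under mutually independent sampling
indicators, `a ≤ 1/(K+1)`, and the existence of `k ≠ l` in `U₂` with
`(π_k − a) y_k ≠ (π_l − a) y_l`, the IHT estimator has strictly smaller MSE. -/
theorem iht_lt_ht_poisson
    {Ω : Type*} [MeasurableSpace Ω] (μ : Measure Ω) [IsProbabilityMeasure μ]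
    (N : ℕ) (y : Fin N → ℝ) (I : Fin N → Ω → ℝ)
    (hI01 : ∀ k, ∀ ω, I k ω = 0 ∨ I k ω = 1)
    (hImeas : ∀ k, Measurable (I k))
    (hIindep : ProbabilityTheory.iIndepFun I μ)
    (π : Fin N → ℝ)
    (hπ : ∀ k, π k = ∫ ω, I k ω ∂μ)
    (hπmem : ∀ k, π k ∈ Set.Ioc (0 : ℝ) 1)
    (a : ℝ) (ha : a ∈ Set.Ioc (0 : ℝ) 1)
    (U2 : Finset (Fin N)) (K : ℕ) (hK : U2.card = K)
    (hU2 : ∀ k ∈ U2, π k ≤ a)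
    (haK : a ≤ 1 / ((K : ℝ) + 1))
    (hstrict : ∃ k ∈ U2, ∃ l ∈ U2, k ≠ l ∧ (π k - a) * y k ≠ (π l - a) * y l)
    (πs : Fin N → ℝ)
    (hπs : ∀ k, πs k = if k ∈ U2 then a else π k) :
    (∫ ω, ((∑ k, I k ω * y k / πs k) - ∑ k, y k) ^ 2 ∂μ)
      < ∫ ω, ((∑ k, I k ω * y k / π k) - ∑ k, y k) ^ 2 ∂μ :=
  iht_lt_ht_poisson_general μ N y I hI01 hImeas hIindep π hπ hπmem a U2 K hK hU2 haK hstrict πs hπs
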